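/- Let N ≥ 1 and let p = (p_i^j) be an N×N matrix with all entries strictly positive. Extend the Bethe free energy F_BP(β) = Σ_{i,j} ( β_i^j ln(β_i^j/p_i^j) − (1 − β_i^j) ln(1 − β_i^j) ) continuously to matrices β with entries in [0,1] using the convention 0·ln 0 = 0. If β* is a global minimizer of F_BP over the Birkhoff polytope of doubly stochastic N×N matrices and some entry of β* equals 0 or 1, then β* is a permutation matrix (all entries of β* are 0 or 1, with exactly one 1 in each row and each column). -/

import Mathlib

/-!
Write `betheTerm p x = negMulLog (1 - x) - negMulLog x - x * log p`. Since
`negMulLog (ε * s) = -s * ε * log ε + O(ε)` while `negMulLog` is smooth away from `0`, moving an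
entry `x` of `β` to `x + ε * s` changes the energy by `s * ε * log ε + O(ε)` if `x ∈ {0, 1}`
and by `O(ε)` otherwise. Hence along a direction `d` preserving row and column sums, the energy
strictly decreases for small `ε > 0` as soon as the boundary entries' net change
`∑ boundaryRate` is positive, because `ε = o(ε * log ε)`.

If a doubly stochastic minimiser had a boundary entry and a fractional one, some row `i₀` would
contain a zero at `j₀` and a fractional entry at `j₁`. Pick `i₁` with `β i₁ j₀ > 0` and push mass
around the cycle `+(i₀, j₀), -(i₀, j₁), -(i₁, j₀), +(i₁, j₁)`: the zero at `(i₀, j₀)` contributes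
`+1`, and the only possible `-1`, from `β i₁ j₀ = 1`, is cancelled by the zero it forces at
`(i₁, j₁)`.
-/

open Filter Real Finset Topology Asymptotics Matrix

noncomputable def betheTerm (p x : ℝ) : ℝ := x * log (x / p) - (1 - x) * log (1 - x)

lemma betheTerm_eq {p : ℝ} (hp : p ≠ 0) (x : ℝ) :
    betheTerm p x = negMulLog (1 - x) - negMulLog x - x * log p := by
  rcases eq_or_ne x 0 with rfl | hx
  · simp [betheTerm, negMulLog]
  · rw [betheTerm, log_div hx hp, negMulLog, negMulLog]
    ring

lemma negMulLog_add_mul_sub_isBigO (y s : ℝ) :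
    (fun ε => negMulLog (y + ε * s) - negMulLog y + (if y = 0 then s else 0) * (ε * log ε))
      =O[𝓝 0] fun ε => ε := by
  split_ifs with hy
  · subst hy
    have h : (fun ε => negMulLog (0 + ε * s) - negMulLog 0 + s * (ε * log ε)) =
        fun ε => negMulLog s * ε := by
      funext ε
      rw [zero_add, negMulLog_mul, negMulLog_zero, negMulLog]
      ring
    rw [h]
    exact isBigO_const_mul_self _ _ _
  · have hline : HasDerivAt (fun ε => y + ε * s) s 0 := by
      simpa using ((hasDerivAt_id (0 : ℝ)).mul_const s).const_add y
    have hy' : y + 0 * s ≠ 0 := by simpa using hy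
    have h := ((hasDerivAt_negMulLog hy').comp 0 hline).isBigO_sub
    simpa [Function.comp_def] using h

noncomputable def boundaryRate (x s : ℝ) : ℝ :=
  (if x = 0 then s else 0) + (if x = 1 then s else 0)

lemma betheTerm_add_mul_sub_isBigO {p : ℝ} (hp : p ≠ 0) (x s : ℝ) :
    (fun ε => betheTerm p (x + ε * s) - betheTerm p x - boundaryRate x s * (ε * log ε))
      =O[𝓝 0] fun ε => ε := by
  have hlin : (fun ε : ℝ => s * log p * ε) =O[𝓝 0] fun ε => ε := isBigO_const_mul_self _ _ _
  refine (((negMulLog_add_mul_sub_isBigO (1 - x) (-s)).sub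
    (negMulLog_add_mul_sub_isBigO x s)).sub hlin).congr_left fun ε => ?_
  have h : 1 - (x + ε * s) = 1 - x + ε * -s := by ring
  simp only [betheTerm_eq hp, boundaryRate, h, sub_eq_zero, @eq_comm ℝ 1 x]
  split_ifs <;> ring

noncomputable def betheFreeEnergy {m n : Type*} [Fintype m] [Fintype n] (p β : Matrix m n ℝ) :
    ℝ :=
  ∑ i, ∑ j, betheTerm (p i j) (β i j)

lemma betheFreeEnergy_add_smul_sub_isBigO {m n : Type*} [Fintype m] [Fintype n]
    {p : Matrix m n ℝ} (hp : ∀ i j, p i j ≠ 0) (β d : Matrix m n ℝ) :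
    (fun ε : ℝ => betheFreeEnergy p (β + ε • d) - betheFreeEnergy p β
      - (∑ i, ∑ j, boundaryRate (β i j) (d i j)) * (ε * log ε)) =O[𝓝 0] fun ε => ε := by
  refine (IsBigO.fun_sum (s := univ) fun i _ => IsBigO.fun_sum (s := univ) fun j _ =>
    betheTerm_add_mul_sub_isBigO (hp i j) (β i j) (d i j)).congr_left fun ε => ?_
  simp only [betheFreeEnergy, Matrix.add_apply, Matrix.smul_apply, smul_eq_mul, mul_comm ε,
    sum_mul, ← sum_sub_distrib]

lemma eventually_neg_of_sub_mul_mul_log_isBigO {D : ℝ → ℝ} {K : ℝ} (hK : 0 < K)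
    (hD : (fun ε => D ε - K * (ε * log ε)) =O[𝓝 0] fun ε => ε) : ∀ᶠ ε in 𝓝[>] 0, D ε < 0 := by
  obtain ⟨C, hC⟩ := hD.bound
  have hlog : ∀ᶠ ε in 𝓝[>] (0 : ℝ), K * log ε + C < 0 :=
    (tendsto_atBot_add_const_right _ C
      (tendsto_log_nhdsGT_zero.const_mul_atBot hK)).eventually (eventually_lt_atBot 0)
  filter_upwards [nhdsWithin_le_nhds hC, hlog, self_mem_nhdsWithin] with ε hCε hlogε hε
  have hε : 0 < ε := hε
  rw [norm_eq_abs, norm_eq_abs, abs_of_pos hε] at hCε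
  have hprod : ε * (K * log ε + C) < 0 := mul_neg_of_pos_of_neg hε hlogε
  nlinarith [le_abs_self (D ε - K * (ε * log ε))]

lemma eventually_nonneg_add_smul {m n : Type*} [Finite m] [Finite n] {β d : Matrix m n ℝ}
    (hβ : ∀ i j, 0 ≤ β i j) (hd : ∀ i j, β i j = 0 → 0 ≤ d i j) :
    ∀ᶠ ε in 𝓝[>] (0 : ℝ), ∀ i j, 0 ≤ (β + ε • d) i j := by
  simp only [eventually_all, Matrix.add_apply, Matrix.smul_apply, smul_eq_mul]
  intro i j
  rcases (hβ i j).eq_or_lt with h | h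
  · filter_upwards [self_mem_nhdsWithin] with ε (hε : 0 < ε)
    rw [← h, zero_add]
    exact mul_nonneg hε.le (hd i j h.symm)
  · have hcont : Tendsto (fun ε => β i j + ε * d i j) (𝓝 0) (𝓝 (β i j)) := by
      simpa using ((continuous_id.mul continuous_const).const_add (β i j)).tendsto' 0 _ (by simp)
    exact nhdsWithin_le_nhds ((hcont.eventually (eventually_gt_nhds h)).mono fun _ h => h.le)

section cycleDir

variable {m n : Type*} [DecidableEq m] [DecidableEq n]

def cycleDir (i₀ i₁ : m) (j₀ j₁ : n) : Matrix m n ℝ :=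
  vecMulVec (Pi.single i₀ 1 - Pi.single i₁ 1) (Pi.single j₀ 1 - Pi.single j₁ 1)

variable {i₀ i₁ : m} {j₀ j₁ : n}

lemma sum_cycleDir_row [Fintype n] (i : m) :
    ∑ j, cycleDir i₀ i₁ j₀ j₁ i j = 0 := by
  simp [cycleDir, vecMulVec_apply, ← mul_sum, sum_sub_distrib]

lemma sum_cycleDir_col [Fintype m] (j : n) :
    ∑ i, cycleDir i₀ i₁ j₀ j₁ i j = 0 := by
  simp [cycleDir, vecMulVec_apply, ← sum_mul, sum_sub_distrib]

lemma cycleDir_nonneg {i : m} {j : n} (h₀₁ : (i, j) ≠ (i₀, j₁)) (h₁₀ : (i, j) ≠ (i₁, j₀)) :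
    0 ≤ cycleDir i₀ i₁ j₀ j₁ i j := by
  simp only [cycleDir, vecMulVec_apply, Pi.sub_apply, Pi.single_apply, ne_eq, Prod.mk.injEq] at *
  split_ifs <;> simp_all

lemma boundaryRate_zero_right (x : ℝ) : boundaryRate x 0 = 0 := by simp [boundaryRate]

lemma sum_boundaryRate_cycleDir [Fintype m] [Fintype n] (β : Matrix m n ℝ) (hi : i₀ ≠ i₁)
    (hj : j₀ ≠ j₁) :
    ∑ i, ∑ j, boundaryRate (β i j) (cycleDir i₀ i₁ j₀ j₁ i j) =
      boundaryRate (β i₀ j₀) 1 + boundaryRate (β i₀ j₁) (-1) +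
        (boundaryRate (β i₁ j₀) (-1) + boundaryRate (β i₁ j₁) 1) := by
  have hrow : ∀ i, i ≠ i₀ ∧ i ≠ i₁ → ∀ j, cycleDir i₀ i₁ j₀ j₁ i j = 0 := fun i hi j => by
    simp [cycleDir, vecMulVec_apply, Pi.single_apply, hi.1, hi.2]
  have hcol : ∀ j, j ≠ j₀ ∧ j ≠ j₁ → ∀ i, cycleDir i₀ i₁ j₀ j₁ i j = 0 := fun j hj i => by
    simp [cycleDir, vecMulVec_apply, Pi.single_apply, hj.1, hj.2]
  rw [Fintype.sum_eq_add i₀ i₁ hi fun i hi => by simp [hrow i hi, boundaryRate_zero_right]]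
  rw [Fintype.sum_eq_add j₀ j₁ hj fun j hj => by simp [hcol j hj, boundaryRate_zero_right],
    Fintype.sum_eq_add j₀ j₁ hj fun j hj => by simp [hcol j hj, boundaryRate_zero_right]]
  simp [cycleDir, vecMulVec_apply, hi, hj, hi.symm, hj.symm]

end cycleDir

section doublyStochastic

variable {n : Type*} [Fintype n] [DecidableEq n]

lemma exists_betheFreeEnergy_lt {p β d : Matrix n n ℝ} (hp : ∀ i j, p i j ≠ 0)
    (hβ : β ∈ doublyStochastic ℝ n) (hrow : ∀ i, ∑ j, d i j = 0) (hcol : ∀ j, ∑ i, d i j = 0)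
    (hd : ∀ i j, β i j = 0 → 0 ≤ d i j) (hrate : 0 < ∑ i, ∑ j, boundaryRate (β i j) (d i j)) :
    ∃ b ∈ doublyStochastic ℝ n, betheFreeEnergy p b < betheFreeEnergy p β := by
  have hdesc := eventually_neg_of_sub_mul_mul_log_isBigO hrate
    (betheFreeEnergy_add_smul_sub_isBigO hp β d)
  obtain ⟨ε, hlt, hnn⟩ := (hdesc.and
    (eventually_nonneg_add_smul (fun i j => nonneg_of_mem_doublyStochastic hβ) hd)).exists
  refine ⟨β + ε • d, mem_doublyStochastic_iff_sum.2 ⟨hnn, fun i => ?_, fun j => ?_⟩, by linarith⟩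
  · simp [sum_add_distrib, ← mul_sum, hrow, sum_row_of_mem_doublyStochastic hβ]
  · simp [sum_add_distrib, ← mul_sum, hcol, sum_col_of_mem_doublyStochastic hβ]

lemma add_le_one_of_mem_doublyStochastic_row {β : Matrix n n ℝ} (hβ : β ∈ doublyStochastic ℝ n)
    (i : n) {j j' : n} (hj : j ≠ j') : β i j + β i j' ≤ 1 := by
  rw [← sum_pair hj, ← sum_row_of_mem_doublyStochastic hβ i]
  exact sum_le_sum_of_subset_of_nonneg (subset_univ _)
    fun _ _ _ => nonneg_of_mem_doublyStochastic hβ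

lemma add_le_one_of_mem_doublyStochastic_col {β : Matrix n n ℝ} (hβ : β ∈ doublyStochastic ℝ n)
    {i i' : n} (j : n) (hi : i ≠ i') : β i j + β i' j ≤ 1 := by
  rw [← sum_pair (f := fun i => β i j) hi, ← sum_col_of_mem_doublyStochastic hβ j]
  exact sum_le_sum_of_subset_of_nonneg (subset_univ _)
    fun _ _ _ => nonneg_of_mem_doublyStochastic hβ

lemma exists_pos_of_mem_doublyStochastic_row {β : Matrix n n ℝ} (hβ : β ∈ doublyStochastic ℝ n)
    (i : n) : ∃ j, 0 < β i j := by
  simpa using exists_lt_of_sum_lt (s := univ) (f := 0) (g := β i)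
    (by simp [sum_row_of_mem_doublyStochastic hβ i])

lemma exists_pos_of_mem_doublyStochastic_col {β : Matrix n n ℝ} (hβ : β ∈ doublyStochastic ℝ n)
    (j : n) : ∃ i, 0 < β i j := by
  simpa using exists_lt_of_sum_lt (s := univ) (f := 0) (g := fun i => β i j)
    (by simp [sum_col_of_mem_doublyStochastic hβ j])

lemma exists_betheFreeEnergy_lt_of_zero_of_fractional {p β : Matrix n n ℝ}
    (hp : ∀ i j, p i j ≠ 0) (hβ : β ∈ doublyStochastic ℝ n) {i₀ j₀ j₁ : n}
    (hzero : β i₀ j₀ = 0) (hpos : 0 < β i₀ j₁) (hlt : β i₀ j₁ < 1) :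
    ∃ b ∈ doublyStochastic ℝ n, betheFreeEnergy p b < betheFreeEnergy p β := by
  obtain ⟨i₁, hi₁⟩ := exists_pos_of_mem_doublyStochastic_col hβ j₀
  have hi : i₀ ≠ i₁ := by rintro rfl; linarith
  have hj : j₀ ≠ j₁ := by rintro rfl; linarith
  refine exists_betheFreeEnergy_lt hp hβ (d := cycleDir i₀ i₁ j₀ j₁) sum_cycleDir_row
    sum_cycleDir_col (fun i j hij => cycleDir_nonneg ?_ ?_) ?_
  · rintro ⟨⟩; linarith
  · rintro ⟨⟩; linarith
  rw [sum_boundaryRate_cycleDir β hi hj, hzero]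
  have h₀₀ : boundaryRate 0 1 = 1 := by simp [boundaryRate]
  have h₀₁ : boundaryRate (β i₀ j₁) (-1) = 0 := by simp [boundaryRate, hpos.ne', hlt.ne]
  have h₁ : 0 ≤ boundaryRate (β i₁ j₀) (-1) + boundaryRate (β i₁ j₁) 1 := by
    rcases eq_or_ne (β i₁ j₀) 1 with h | h
    · have h₁₁ : β i₁ j₁ = 0 := le_antisymm
        (by linarith [add_le_one_of_mem_doublyStochastic_row hβ i₁ hj])
        (nonneg_of_mem_doublyStochastic hβ)
      simp [boundaryRate, h, h₁₁]
    · simp only [boundaryRate, hi₁.ne', h, if_false]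
      split_ifs <;> norm_num
  linarith

lemma exists_zero_and_fractional_in_row {β : Matrix n n ℝ} (hβ : β ∈ doublyStochastic ℝ n)
    (hbdry : ∃ i j, β i j = 0 ∨ β i j = 1) (hfrac : ∃ i j, 0 < β i j ∧ β i j < 1) :
    ∃ i₀ j₀ j₁, β i₀ j₀ = 0 ∧ 0 < β i₀ j₁ ∧ β i₀ j₁ < 1 := by
  by_cases hone : ∃ c d, β c d = 1
  · obtain ⟨c, d, hcd⟩ := hone
    obtain ⟨a, b, hab, hab'⟩ := hfrac
    have hac : a ≠ c := by
      rintro rfl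
      have hbd : b ≠ d := by rintro rfl; linarith
      linarith [add_le_one_of_mem_doublyStochastic_row hβ a hbd]
    refine ⟨a, d, b, le_antisymm ?_ (nonneg_of_mem_doublyStochastic hβ), hab, hab'⟩
    linarith [add_le_one_of_mem_doublyStochastic_col hβ d hac]
  · simp only [not_exists] at hone
    obtain ⟨c, d, hcd⟩ := hbdry
    obtain ⟨j, hj⟩ := exists_pos_of_mem_doublyStochastic_row hβ c
    exact ⟨c, d, j, hcd.resolve_right (hone c d), hj,
      (le_one_of_mem_doublyStochastic hβ).lt_of_ne (hone c j)⟩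

end doublyStochastic

lemma existsUnique_eq_one_of_sum_eq_one {ι : Type*} [Fintype ι] {f : ι → ℝ}
    (h01 : ∀ i, f i = 0 ∨ f i = 1) (hsum : ∑ i, f i = 1) : ∃! i, f i = 1 := by
  classical
  have hcard : (#{i | f i = 1} : ℝ) = 1 := by
    rw [← sum_boole]
    refine (sum_congr rfl fun i _ => ?_).trans hsum
    rcases h01 i with h | h <;> simp [h]
  obtain ⟨a, ha⟩ := card_eq_one.1 (by exact_mod_cast hcard)
  simp only [Finset.ext_iff, mem_filter_univ, mem_singleton] at ha
  exact ⟨a, (ha a).2 rfl, fun i hi => (ha i).1 hi⟩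

theorem bethe_boundary_minimizer_is_permutation_general (N : ℕ)
    (p : Fin N → Fin N → ℝ) (hp : ∀ i j, 0 < p i j)
    (β : Fin N → Fin N → ℝ)
    (hβmem : (∀ i j, 0 ≤ β i j) ∧ (∀ i, ∑ j, β i j = 1) ∧ (∀ j, ∑ i, β i j = 1))
    (hmin : ∀ b : Fin N → Fin N → ℝ,
      (∀ i j, 0 ≤ b i j) → (∀ i, ∑ j, b i j = 1) → (∀ j, ∑ i, b i j = 1) →
      (∑ i, ∑ j, (β i j * Real.log (β i j / p i j)
          - (1 - β i j) * Real.log (1 - β i j))) ≤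
        ∑ i, ∑ j, (b i j * Real.log (b i j / p i j)
          - (1 - b i j) * Real.log (1 - b i j)))
    (hbdry : ∃ i j, β i j = 0 ∨ β i j = 1) :
    (∀ i j, β i j = 0 ∨ β i j = 1) ∧
      (∀ i, ∃! j, β i j = 1) ∧ (∀ j, ∃! i, β i j = 1) := by
  have hβ : β ∈ doublyStochastic ℝ (Fin N) := mem_doublyStochastic_iff_sum.2 hβmem
  have h01 : ∀ i j, β i j = 0 ∨ β i j = 1 := by
    by_contra! ⟨i, j, h0, h1⟩
    obtain ⟨i₀, j₀, j₁, hzero, hpos, hlt⟩ := exists_zero_and_fractional_in_row hβ hbdry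
      ⟨i, j, (nonneg_of_mem_doublyStochastic hβ).lt_of_ne' h0,
        (le_one_of_mem_doublyStochastic hβ).lt_of_ne h1⟩
    obtain ⟨b, hb, hFb⟩ := exists_betheFreeEnergy_lt_of_zero_of_fractional
      (fun i j => (hp i j).ne') hβ hzero hpos hlt
    obtain ⟨hb₀, hb_row, hb_col⟩ := mem_doublyStochastic_iff_sum.1 hb
    exact (hmin b hb₀ hb_row hb_col).not_gt hFb
  exact ⟨h01, fun i => existsUnique_eq_one_of_sum_eq_one (h01 i) (hβmem.2.1 i),
    fun j => existsUnique_eq_one_of_sum_eq_one (h01 · j) (hβmem.2.2 j)⟩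

/-- If a global minimizer `β*` of the Bethe free energy
`F_BP(β) = Σ_{i,j} (β_i^j ln(β_i^j/p_i^j) - (1-β_i^j) ln(1-β_i^j))` over the Birkhoff
polytope has some entry equal to `0` or `1`, then `β*` is a permutation matrix.
(Terms with `β_i^j ∈ {0,1}` are automatically `0` here since `Real.log 0 = 0`,
matching the convention `0 · ln 0 = 0`.) -/
theorem bethe_boundary_minimizer_is_permutation (N : ℕ) (hN : 1 ≤ N)
    (p : Fin N → Fin N → ℝ) (hp : ∀ i j, 0 < p i j)
    (β : Fin N → Fin N → ℝ)
    (hβmem : (∀ i j, 0 ≤ β i j) ∧ (∀ i, ∑ j, β i j = 1) ∧ (∀ j, ∑ i, β i j = 1))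
    (hmin : ∀ b : Fin N → Fin N → ℝ,
      (∀ i j, 0 ≤ b i j) → (∀ i, ∑ j, b i j = 1) → (∀ j, ∑ i, b i j = 1) →
      (∑ i, ∑ j, (β i j * Real.log (β i j / p i j)
          - (1 - β i j) * Real.log (1 - β i j))) ≤
        ∑ i, ∑ j, (b i j * Real.log (b i j / p i j)
          - (1 - b i j) * Real.log (1 - b i j)))
    (hbdry : ∃ i j, β i j = 0 ∨ β i j = 1) :
    (∀ i j, β i j = 0 ∨ β i j = 1) ∧
      (∀ i, ∃! j, β i j = 1) ∧ (∀ j, ∃! i, β i j = 1) :=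
  bethe_boundary_minimizer_is_permutation_general N p hp β hβmem hmin hbdry
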